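/- Let z_0 be a real random variable with E[z_0²] = 1 and P(|z_0| = 1) < 1. Then there exists d* ∈ [0,1) such that for all d ∈ (d*, 1), L(d) + E[z_0² log(z_0²)] > 0, where L(d) = Σ_{j≥1} π_j(d) log(π_j(d)). -/

import Mathlib

open MeasureTheory ProbabilityTheory Filter ENNReal

noncomputable section

/-- The FIGARCH(0,d,0) coefficients: `π_1(d) = d`,
`π_j(d) = d(1−d)(2−d)⋯(j−1−d)/j!` for `j ≥ 2`; these are the coefficients of the power
series expansion `1 − (1−x)^d = Σ_{j≥1} π_j(d) x^j`. -/
def figarchPi (d : ℝ) (j : ℕ) : ℝ :=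
  d * (∏ i ∈ Finset.range (j - 1), ((i : ℝ) + 1 - d)) / (Nat.factorial j)

/-- The condition `Σ_{j≥1} a_j log(a_j) + E[z_0² log(z_0²)] ∈ (0, ∞]`: either
`E[z_0² log(z_0²)] = ∞` (i.e. `z_0² log(z_0²)` is not integrable, its negative part being
bounded), or the sum is finite and positive. -/
def EntropyPos {Ω : Type*} [MeasurableSpace Ω] (P : Measure Ω) (z0 : Ω → ℝ)
    (a : ℕ → ℝ) : Prop :=
  ¬ Integrable (fun ω => z0 ω ^ 2 * Real.log (z0 ω ^ 2)) P ∨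
    0 < (∑' j : ℕ+, a j * Real.log (a j)) + ∫ ω, z0 ω ^ 2 * Real.log (z0 ω ^ 2) ∂P

namespace FigarchAux

lemma sub_one_le_mul_log {t : ℝ} (ht : 0 ≤ t) : t - 1 ≤ t * Real.log t := by
  rcases eq_or_lt_of_le ht with h | h
  · simp [← h]
  · have h2 : Real.log t⁻¹ ≤ t⁻¹ - 1 := Real.log_le_sub_one_of_pos (by positivity)
    rw [Real.log_inv] at h2
    have h3 := mul_le_mul_of_nonneg_left h2 ht
    have ht' : t * (t⁻¹ - 1) = 1 - t := by field_simp
    nlinarith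

lemma sub_one_lt_mul_log {t : ℝ} (ht : 0 ≤ t) (h1 : t ≠ 1) : t - 1 < t * Real.log t := by
  rcases eq_or_lt_of_le ht with h | h
  · simp [← h]
  · have hinv : t⁻¹ ≠ 1 := by
      intro hh
      exact h1 (by field_simp at hh; linarith)
    have h2 : Real.log t⁻¹ < t⁻¹ - 1 :=
      Real.log_lt_sub_one_of_pos (by positivity) hinv
    rw [Real.log_inv] at h2
    have h3 := mul_lt_mul_of_pos_left h2 h
    have ht' : t * (t⁻¹ - 1) = 1 - t := by field_simp
    nlinarith

-- telescoping products
lemma prod_add_one (m : ℕ) : ∏ i ∈ Finset.range m, ((i : ℝ) + 1) = Nat.factorial m := by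
  induction m with
  | zero => simp
  | succ n ih => rw [Finset.prod_range_succ, ih, Nat.factorial_succ]; push_cast; ring

lemma prod_add_two (m : ℕ) : ∏ i ∈ Finset.range m, ((i : ℝ) + 2) = Nat.factorial (m + 1) := by
  induction m with
  | zero => simp
  | succ n ih =>
    rw [Finset.prod_range_succ, ih]
    have : (n + 1 + 1).factorial = (n + 2) * (n + 1).factorial := by
      rw [Nat.factorial_succ]
    rw [this]; push_cast; ring

lemma prod_ratio (k : ℕ) :
    ∏ i ∈ Finset.range k, (((i : ℝ) + 1) / ((i : ℝ) + 2)) = 1 / ((k : ℝ) + 1) := by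
  induction k with
  | zero => simp
  | succ n ih =>
    rw [Finset.prod_range_succ, ih]
    have h1 : (n : ℝ) + 1 ≠ 0 := by positivity
    have h2 : (n : ℝ) + 2 ≠ 0 := by positivity
    push_cast
    field_simp
    ring

lemma term_bound {d : ℝ} (hd0 : 0 ≤ d) {a : ℝ} (ha : 1 ≤ a) :
    a - d ≤ a * (a / (a + 1)) ^ (d : ℝ) := by
  have ha0 : 0 < a := by linarith
  have ha1 : 0 < a + 1 := by linarith
  have hq : 0 < a / (a + 1) := by positivity
  have h1 : 1 - d / a ≤ Real.exp (-(d / a)) := by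
    have := Real.add_one_le_exp (-(d / a)); linarith
  have hlog : -(1 / a) ≤ Real.log (a / (a + 1)) := by
    have h2 : Real.log ((a + 1) / a) ≤ (a + 1) / a - 1 :=
      Real.log_le_sub_one_of_pos (by positivity)
    have h3 : (a + 1) / a - 1 = 1 / a := by field_simp; ring
    have h4 : Real.log (a / (a + 1)) = -Real.log ((a + 1) / a) := by
      rw [← Real.log_inv]; congr 1; field_simp
    rw [h4]; linarith [h2.trans_eq h3]
  have h2 : Real.exp (-(d / a)) ≤ (a / (a + 1)) ^ (d : ℝ) := by
    rw [Real.rpow_def_of_pos hq]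
    apply Real.exp_le_exp.mpr
    have : -(d / a) = (-(1 / a)) * d := by ring
    rw [this]
    exact mul_le_mul_of_nonneg_right hlog hd0
  calc a - d = a * (1 - d / a) := by field_simp
    _ ≤ a * Real.exp (-(d / a)) := by
        exact mul_le_mul_of_nonneg_left h1 (le_of_lt ha0)
    _ ≤ a * (a / (a + 1)) ^ (d : ℝ) := mul_le_mul_of_nonneg_left h2 (le_of_lt ha0)

lemma prod_le_rpow {d : ℝ} (hd0 : 0 ≤ d) (hd1 : d ≤ 1) (k : ℕ) :
    ∏ i ∈ Finset.range k, ((i : ℝ) + 1 - d) ≤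
      (Nat.factorial k : ℝ) * ((k : ℝ) + 1) ^ (-d : ℝ) := by
  have step : ∏ i ∈ Finset.range k, ((i : ℝ) + 1 - d) ≤
      ∏ i ∈ Finset.range k, (((i : ℝ) + 1) * (((i : ℝ) + 1) / ((i : ℝ) + 2)) ^ (d : ℝ)) := by
    apply Finset.prod_le_prod
    · intro i _
      have hi : (0 : ℝ) ≤ (i : ℝ) := Nat.cast_nonneg i
      linarith
    · intro i _
      have hi : (0 : ℝ) ≤ (i : ℝ) := Nat.cast_nonneg i
      have h := term_bound hd0 (a := (i : ℝ) + 1) (by linarith)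
      have he : (i : ℝ) + 1 + 1 = (i : ℝ) + 2 := by ring
      rw [he] at h
      exact h
  rw [Finset.prod_mul_distrib] at step
  rw [Real.finset_prod_rpow _ _ (fun i _ => by positivity) d] at step
  rw [prod_ratio, prod_add_one] at step
  have : ((1 : ℝ) / ((k : ℝ) + 1)) ^ (d : ℝ) = ((k : ℝ) + 1) ^ (-d : ℝ) := by
    rw [one_div, Real.inv_rpow (by positivity), ← Real.rpow_neg (by positivity)]
  rw [this] at step
  exact step

lemma figarchPi_le_rpow {d : ℝ} (hd0 : 0 < d) (hd1 : d < 1) (k : ℕ) :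
    figarchPi d (k + 1) ≤ d * ((k : ℝ) + 1) ^ (-1 - d : ℝ) := by
  have hfac : (0 : ℝ) < (Nat.factorial (k + 1) : ℝ) := by
    exact_mod_cast Nat.factorial_pos (k + 1)
  have h := prod_le_rpow hd0.le hd1.le k
  have hfe : (Nat.factorial (k + 1) : ℝ) = ((k : ℝ) + 1) * (Nat.factorial k : ℝ) := by
    rw [Nat.factorial_succ]; push_cast; ring
  unfold figarchPi
  simp only [Nat.add_sub_cancel]
  rw [div_le_iff₀ hfac]
  have hrw : d * ((k : ℝ) + 1) ^ (-1 - d : ℝ) * (Nat.factorial (k + 1) : ℝ)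
      = d * ((Nat.factorial k : ℝ) * ((k : ℝ) + 1) ^ (-d : ℝ)) := by
    rw [hfe]
    have : ((k : ℝ) + 1) ^ (-1 - d : ℝ) * ((k : ℝ) + 1) = ((k : ℝ) + 1) ^ (-d : ℝ) := by
      rw [show ((k:ℝ)+1) ^ (-d : ℝ) = ((k:ℝ)+1) ^ ((-1-d) + 1 : ℝ) by congr 1; ring,
        Real.rpow_add (by positivity), Real.rpow_one]
    calc d * ((k : ℝ) + 1) ^ (-1 - d : ℝ) * (((k : ℝ) + 1) * (Nat.factorial k : ℝ))
        = d * ((Nat.factorial k : ℝ) * (((k : ℝ) + 1) ^ (-1 - d : ℝ) * ((k : ℝ) + 1))) := by ring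
      _ = d * ((Nat.factorial k : ℝ) * ((k : ℝ) + 1) ^ (-d : ℝ)) := by rw [this]
  rw [hrw]
  exact mul_le_mul_of_nonneg_left h hd0.le

lemma figarchPi_pos {d : ℝ} (hd0 : 0 < d) (hd1 : d < 1) (j : ℕ) : 0 < figarchPi d j := by
  unfold figarchPi
  have hfac : (0 : ℝ) < (Nat.factorial j : ℝ) := by exact_mod_cast Nat.factorial_pos j
  apply div_pos _ hfac
  apply mul_pos hd0
  apply Finset.prod_pos
  intro i _
  have hi : (0 : ℝ) ≤ (i : ℝ) := Nat.cast_nonneg i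
  linarith

lemma figarchPi_le_linear {d : ℝ} (hd0 : 0 < d) (hd1 : d < 1) (m : ℕ) :
    figarchPi d (m + 2) ≤ d * (1 - d) / ((m : ℝ) + 2) := by
  have hprod : ∏ i ∈ Finset.range (m + 1), ((i : ℝ) + 1 - d) ≤ (1 - d) * (Nat.factorial (m + 1) : ℝ) := by
    rw [Finset.prod_range_succ']
    simp only [Nat.cast_add, Nat.cast_one]
    have h1 : ∏ i ∈ Finset.range m, ((i : ℝ) + 1 + 1 - d) ≤ ∏ i ∈ Finset.range m, ((i : ℝ) + 2) := by
      apply Finset.prod_le_prod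
      · intro i _; have hi : (0 : ℝ) ≤ (i : ℝ) := Nat.cast_nonneg i; linarith
      · intro i _; linarith
    rw [prod_add_two] at h1
    have h0 : ((0 : ℕ) : ℝ) + 1 - d = 1 - d := by norm_num
    rw [h0]
    calc (∏ i ∈ Finset.range m, ((i : ℝ) + 1 + 1 - d)) * (1 - d)
        ≤ (Nat.factorial (m + 1) : ℝ) * (1 - d) := by
          apply mul_le_mul_of_nonneg_right h1 (by linarith)
      _ = (1 - d) * (Nat.factorial (m + 1) : ℝ) := by ring
  unfold figarchPi
  rw [show m + 2 - 1 = m + 1 from rfl]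
  have hfac : (0 : ℝ) < (Nat.factorial (m + 2) : ℝ) := by exact_mod_cast Nat.factorial_pos (m + 2)
  rw [div_le_div_iff₀ hfac (by positivity)]
  have hfe : (Nat.factorial (m + 2) : ℝ) = ((m : ℝ) + 2) * (Nat.factorial (m + 1) : ℝ) := by
    rw [show m + 2 = (m + 1) + 1 from rfl, Nat.factorial_succ]; push_cast; ring
  calc d * (∏ i ∈ Finset.range (m + 1), ((i : ℝ) + 1 - d)) * ((m : ℝ) + 2)
      ≤ d * ((1 - d) * (Nat.factorial (m + 1) : ℝ)) * ((m : ℝ) + 2) := by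
        apply mul_le_mul_of_nonneg_right _ (by positivity)
        exact mul_le_mul_of_nonneg_left hprod hd0.le
    _ = d * (1 - d) * (Nat.factorial (m + 2) : ℝ) := by rw [hfe]; ring

lemma figarchPi_ge {d : ℝ} (hd0 : 0 < d) (hd1 : d < 1) (j : ℕ) (hj : 1 ≤ j) :
    d * (1 - d) / ((j : ℝ)) ^ 2 ≤ figarchPi d j := by
  match j, hj with
  | 1, _ =>
    have : figarchPi d 1 = d := by unfold figarchPi; simp
    rw [this]
    have : (0:ℝ) < d := hd0
    nlinarith
  | (m + 2), _ =>
    have hprod : (1 - d) * (Nat.factorial m : ℝ) ≤ ∏ i ∈ Finset.range (m + 1), ((i : ℝ) + 1 - d) := by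
      rw [Finset.prod_range_succ']
      simp only [Nat.cast_add, Nat.cast_one]
      have h1 : ∏ i ∈ Finset.range m, ((i : ℝ) + 1) ≤ ∏ i ∈ Finset.range m, ((i : ℝ) + 1 + 1 - d) := by
        apply Finset.prod_le_prod
        · intro i _; positivity
        · intro i _; linarith
      rw [prod_add_one] at h1
      have h0 : ((0 : ℕ) : ℝ) + 1 - d = 1 - d := by norm_num
      rw [h0]
      calc (1 - d) * (Nat.factorial m : ℝ)
          = (Nat.factorial m : ℝ) * (1 - d) := by ring
        _ ≤ (∏ i ∈ Finset.range m, ((i : ℝ) + 1 + 1 - d)) * (1 - d) :=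
            mul_le_mul_of_nonneg_right h1 (by linarith)
    unfold figarchPi
    rw [show m + 2 - 1 = m + 1 from rfl]
    have hfac : (0 : ℝ) < (Nat.factorial (m + 2) : ℝ) := by
      exact_mod_cast Nat.factorial_pos (m + 2)
    have hcast : ((m + 2 : ℕ) : ℝ) = (m : ℝ) + 2 := by push_cast; ring
    rw [hcast, div_le_div_iff₀ (by positivity) hfac]
    have hfe : (Nat.factorial (m + 2) : ℝ) = ((m : ℝ) + 2) * ((m : ℝ) + 1) * (Nat.factorial m : ℝ) := by
      rw [show m + 2 = (m + 1) + 1 from rfl, Nat.factorial_succ, Nat.factorial_succ]; push_cast; ring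
    have hm0 : (0:ℝ) ≤ (m:ℝ) := Nat.cast_nonneg m
    have hfm : (1:ℝ) ≤ (Nat.factorial m : ℝ) := by exact_mod_cast Nat.one_le_iff_ne_zero.mpr (Nat.factorial_pos m).ne'
    calc d * (1 - d) * (Nat.factorial (m + 2) : ℝ)
        = (d * (1 - d) * (Nat.factorial m : ℝ)) * (((m : ℝ) + 2) * ((m : ℝ) + 1)) := by rw [hfe]; ring
      _ ≤ (d * (∏ i ∈ Finset.range (m + 1), ((i : ℝ) + 1 - d))) * (((m : ℝ) + 2) ^ 2) := by
          apply mul_le_mul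
          · rw [mul_assoc]
            exact mul_le_mul_of_nonneg_left hprod hd0.le
          · nlinarith
          · nlinarith
          · apply mul_nonneg hd0.le
            apply Finset.prod_nonneg
            intro i _
            have : (0:ℝ) ≤ (i:ℝ) := Nat.cast_nonneg i
            linarith

lemma figarchPi_le_one {d : ℝ} (hd0 : 0 < d) (hd1 : d < 1) (k : ℕ) :
    figarchPi d (k + 1) ≤ 1 := by
  calc figarchPi d (k + 1) ≤ d * ((k : ℝ) + 1) ^ (-1 - d : ℝ) := figarchPi_le_rpow hd0 hd1 k
    _ ≤ d * 1 := by
        apply mul_le_mul_of_nonneg_left _ hd0.le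
        apply Real.rpow_le_one_of_one_le_of_nonpos
        · have : (0:ℝ) ≤ (k:ℝ) := Nat.cast_nonneg k; linarith
        · linarith
    _ ≤ 1 := by linarith

lemma one_sub_le_sqrt {d : ℝ} (hd0 : 0 ≤ d) (hd1 : d ≤ 1) : 1 - d ≤ Real.sqrt (1 - d) := by
  have h : (0:ℝ) ≤ 1 - d := by linarith
  have hs := Real.sq_sqrt h
  have hn := Real.sqrt_nonneg (1 - d)
  nlinarith [sq_nonneg (Real.sqrt (1 - d) - 1), sq_nonneg (Real.sqrt (1 - d) + 1)]

lemma key_bound {d : ℝ} (hd : 1/2 < d) (hd1 : d < 1) (j : ℕ) (hj : 1 ≤ j) :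
    |figarchPi d j * Real.log (figarchPi d j)| ≤
      Real.sqrt (1 - d) * (16 + (-Real.log d - Real.log (1 - d))) * (j : ℝ) ^ (-(9/8) : ℝ) := by
  have hd0 : (0:ℝ) < d := by linarith
  set C : ℝ := -Real.log d - Real.log (1 - d) with hCdef
  have hlogd : Real.log d ≤ 0 := Real.log_nonpos hd0.le hd1.le
  have hlog1d : Real.log (1 - d) ≤ 0 := Real.log_nonpos (by linarith) (by linarith)
  have hC : 0 ≤ C := by rw [hCdef]; linarith
  have hsq : 0 ≤ Real.sqrt (1 - d) := Real.sqrt_nonneg _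
  match j, hj with
  | 1, _ =>
    have hpi : figarchPi d 1 = d := by unfold figarchPi; simp
    rw [hpi]
    have habs : |d * Real.log d| = -(d * Real.log d) := by
      rw [abs_of_nonpos]; exact mul_nonpos_of_nonneg_of_nonpos hd0.le hlogd
    rw [habs]
    have h1 : -(d * Real.log d) ≤ 1 - d := by
      have := sub_one_le_mul_log hd0.le; linarith
    have h2 : (1:ℝ) - d ≤ Real.sqrt (1 - d) := one_sub_le_sqrt hd0.le hd1.le
    have h3 : ((1:ℕ):ℝ) ^ (-(9/8) : ℝ) = 1 := by norm_num
    rw [h3, mul_one]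
    nlinarith
  | (m + 2), _ =>
    set J : ℝ := (m : ℝ) + 2 with hJdef
    have hJ1 : (1:ℝ) ≤ J := by
      have : (0:ℝ) ≤ (m:ℝ) := Nat.cast_nonneg m; rw [hJdef]; linarith
    have hJ0 : (0:ℝ) < J := by linarith
    have hcast : ((m + 2 : ℕ) : ℝ) = J := by rw [hJdef]; push_cast; ring
    set p : ℝ := figarchPi d (m + 2) with hpdef
    have hp0 : 0 < p := figarchPi_pos hd0 hd1 (m + 2)
    have hp1 : p ≤ 1 := by
      have := figarchPi_le_one hd0 hd1 (m + 1)
      rwa [show m + 1 + 1 = m + 2 from rfl] at this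
    have hlow : d * (1 - d) / J ^ 2 ≤ p := by
      have := figarchPi_ge hd0 hd1 (m + 2) (by omega)
      rwa [hcast] at this
    have hlin : p ≤ d * (1 - d) / J := by
      have := figarchPi_le_linear hd0 hd1 m
      rwa [show (m:ℝ) + 2 = J from rfl] at this
    have hrpow : p ≤ d * J ^ (-1 - d : ℝ) := by
      have h := figarchPi_le_rpow hd0 hd1 (m + 1)
      rw [show m + 1 + 1 = m + 2 from rfl] at h
      have : ((m + 1 : ℕ) : ℝ) + 1 = J := by rw [hJdef]; push_cast; ring
      rwa [this] at h
    -- log lower bound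
    have hlogJ : 0 ≤ Real.log J := Real.log_nonneg hJ1
    have hneglogp : -Real.log p ≤ 2 * Real.log J + C := by
      have hll : Real.log (d * (1 - d) / J ^ 2) ≤ Real.log p :=
        Real.log_le_log (div_pos (mul_pos hd0 (by linarith)) (by positivity)) hlow
      have hexp : Real.log (d * (1 - d) / J ^ 2) =
          Real.log d + Real.log (1 - d) - 2 * Real.log J := by
        rw [Real.log_div (ne_of_gt (mul_pos hd0 (by linarith))) (by positivity),
          Real.log_mul (ne_of_gt hd0) (by norm_num; linarith), Real.log_pow]
        push_cast; ring
      rw [hexp] at hll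
      rw [hCdef]; linarith
    have hneglogp0 : 0 ≤ -Real.log p := by
      have := Real.log_nonpos hp0.le hp1; linarith
    -- geometric mean bound
    have hgm : p ≤ d * Real.sqrt (1 - d) * J ^ (-1 - d/2 : ℝ) := by
      have hJr0 : (0:ℝ) < J ^ (-1 - d/2 : ℝ) := Real.rpow_pos_of_pos hJ0 _
      have hsqr : (d * Real.sqrt (1 - d) * J ^ (-1 - d/2 : ℝ)) ^ 2
          = d ^ 2 * (1 - d) * J ^ (-2 - d : ℝ) := by
        rw [mul_pow, mul_pow, Real.sq_sqrt (by linarith)]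
        congr 1
        rw [← Real.rpow_natCast (J ^ (-1 - d/2 : ℝ)) 2, ← Real.rpow_mul hJ0.le]
        congr 1; push_cast; ring
      have hp2 : p ^ 2 ≤ d ^ 2 * (1 - d) * J ^ (-2 - d : ℝ) := by
        have hmul : p ^ 2 ≤ (d * (1 - d) / J) * (d * J ^ (-1 - d : ℝ)) := by
          rw [sq]
          apply mul_le_mul hlin hrpow hp0.le (div_nonneg (by nlinarith) hJ0.le)
        have heq : (d * (1 - d) / J) * (d * J ^ (-1 - d : ℝ))
            = d ^ 2 * (1 - d) * J ^ (-2 - d : ℝ) := by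
          rw [show J ^ (-2 - d : ℝ) = J ^ (-1 : ℝ) * J ^ (-1 - d : ℝ) by
            rw [← Real.rpow_add hJ0]; congr 1; ring]
          rw [Real.rpow_neg_one]
          field_simp
        linarith
      calc p = Real.sqrt (p ^ 2) := (Real.sqrt_sq hp0.le).symm
        _ ≤ Real.sqrt ((d * Real.sqrt (1 - d) * J ^ (-1 - d/2 : ℝ)) ^ 2) := by
            apply Real.sqrt_le_sqrt; rw [hsqr]; exact hp2
        _ = d * Real.sqrt (1 - d) * J ^ (-1 - d/2 : ℝ) := Real.sqrt_sq (by positivity)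
    -- exponent comparisons
    have hexp1 : J ^ (-1 - d/2 : ℝ) ≤ J ^ (-(9/8) : ℝ) :=
      Real.rpow_le_rpow_of_exponent_le hJ1 (by linarith)
    have hlogle : Real.log J ≤ 8 * J ^ ((1:ℝ)/8) := by
      have := Real.log_le_rpow_div hJ0.le (show (0:ℝ) < 1/8 by norm_num)
      calc Real.log J ≤ J ^ ((1:ℝ)/8) / (1/8) := this
        _ = 8 * J ^ ((1:ℝ)/8) := by ring
    have hexp2 : J ^ (-1 - d/2 : ℝ) * J ^ ((1:ℝ)/8) ≤ J ^ (-(9/8) : ℝ) := by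
      rw [← Real.rpow_add hJ0]
      apply Real.rpow_le_rpow_of_exponent_le hJ1
      linarith
    -- combine
    have habs : |p * Real.log p| = p * (-Real.log p) := by
      rw [abs_of_nonpos (mul_nonpos_of_nonneg_of_nonpos hp0.le (by linarith))]
      ring
    rw [habs]
    have hJr9 : (0:ℝ) ≤ J ^ (-(9/8) : ℝ) := (Real.rpow_pos_of_pos hJ0 _).le
    have hstep : p * (-Real.log p) ≤ p * (2 * Real.log J + C) :=
      mul_le_mul_of_nonneg_left hneglogp hp0.le
    have hterm1 : p * (2 * Real.log J) ≤ 16 * (d * Real.sqrt (1 - d)) * J ^ (-(9/8) : ℝ) := by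
      calc p * (2 * Real.log J)
          ≤ (d * Real.sqrt (1 - d) * J ^ (-1 - d/2 : ℝ)) * (2 * Real.log J) := by
            apply mul_le_mul_of_nonneg_right hgm (by linarith)
        _ ≤ (d * Real.sqrt (1 - d) * J ^ (-1 - d/2 : ℝ)) * (2 * (8 * J ^ ((1:ℝ)/8))) := by
            apply mul_le_mul_of_nonneg_left _ (by positivity)
            linarith
        _ = 16 * (d * Real.sqrt (1 - d)) * (J ^ (-1 - d/2 : ℝ) * J ^ ((1:ℝ)/8)) := by ring
        _ ≤ 16 * (d * Real.sqrt (1 - d)) * J ^ (-(9/8) : ℝ) := by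
            apply mul_le_mul_of_nonneg_left hexp2 (by positivity)
    have hterm2 : p * C ≤ d * Real.sqrt (1 - d) * J ^ (-(9/8) : ℝ) * C := by
      have : p ≤ d * Real.sqrt (1 - d) * J ^ (-(9/8) : ℝ) := by
        calc p ≤ d * Real.sqrt (1 - d) * J ^ (-1 - d/2 : ℝ) := hgm
          _ ≤ d * Real.sqrt (1 - d) * J ^ (-(9/8) : ℝ) := by
              apply mul_le_mul_of_nonneg_left hexp1 (by positivity)
      exact mul_le_mul_of_nonneg_right this hC
    have hfin : p * (-Real.log p) ≤
        Real.sqrt (1 - d) * (16 + C) * J ^ (-(9/8) : ℝ) := by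
      have hd1' : d ≤ 1 := hd1.le
      have hds : d * Real.sqrt (1 - d) ≤ Real.sqrt (1 - d) := by
        have := mul_le_mul_of_nonneg_right hd1' hsq; linarith
      have e1 : 16 * (d * Real.sqrt (1 - d)) * J ^ (-(9/8) : ℝ)
          ≤ 16 * Real.sqrt (1 - d) * J ^ (-(9/8) : ℝ) := by
        apply mul_le_mul_of_nonneg_right _ hJr9
        linarith
      have e2 : d * Real.sqrt (1 - d) * J ^ (-(9/8) : ℝ) * C
          ≤ Real.sqrt (1 - d) * J ^ (-(9/8) : ℝ) * C := by
        apply mul_le_mul_of_nonneg_right _ hC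
        exact mul_le_mul_of_nonneg_right hds hJr9
      have hsplit : p * (2 * Real.log J + C) = p * (2 * Real.log J) + p * C := by ring
      have hre : Real.sqrt (1 - d) * (16 + C) * J ^ (-(9/8) : ℝ)
          = 16 * Real.sqrt (1 - d) * J ^ (-(9/8) : ℝ)
            + Real.sqrt (1 - d) * J ^ (-(9/8) : ℝ) * C := by ring
      calc p * (-Real.log p) ≤ p * (2 * Real.log J) + p * C := by
            rw [← hsplit]; exact hstep
        _ ≤ 16 * (d * Real.sqrt (1 - d)) * J ^ (-(9/8) : ℝ)
              + d * Real.sqrt (1 - d) * J ^ (-(9/8) : ℝ) * C := add_le_add hterm1 hterm2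
        _ ≤ 16 * Real.sqrt (1 - d) * J ^ (-(9/8) : ℝ)
              + Real.sqrt (1 - d) * J ^ (-(9/8) : ℝ) * C := add_le_add e1 e2
        _ = Real.sqrt (1 - d) * (16 + C) * J ^ (-(9/8) : ℝ) := hre.symm
    rw [hcast]
    exact hfin

lemma summable_rpow_pnat : Summable (fun j : ℕ+ => ((j : ℕ) : ℝ) ^ (-(9/8) : ℝ)) := by
  have h : Summable (fun n : ℕ => (n : ℝ) ^ (-(9/8) : ℝ)) :=
    Real.summable_nat_rpow.mpr (by norm_num)
  exact h.comp_injective PNat.coe_injective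

lemma L_est {d : ℝ} (hd : 1/2 < d) (hd1 : d < 1) :
    Summable (fun j : ℕ+ => figarchPi d j * Real.log (figarchPi d j)) ∧
    |∑' j : ℕ+, figarchPi d j * Real.log (figarchPi d j)| ≤
      Real.sqrt (1 - d) * (16 + (-Real.log d - Real.log (1 - d)))
        * ∑' j : ℕ+, ((j : ℕ) : ℝ) ^ (-(9/8) : ℝ) := by
  have hd0 : (0:ℝ) < d := by linarith
  set c : ℝ := Real.sqrt (1 - d) * (16 + (-Real.log d - Real.log (1 - d))) with hcdef
  have hC : 0 ≤ 16 + (-Real.log d - Real.log (1 - d)) := by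
    have h1 : Real.log d ≤ 0 := Real.log_nonpos hd0.le hd1.le
    have h2 : Real.log (1 - d) ≤ 0 := Real.log_nonpos (by linarith) (by linarith)
    linarith
  have hc : 0 ≤ c := mul_nonneg (Real.sqrt_nonneg _) hC
  have hmaj : ∀ j : ℕ+, |figarchPi d j * Real.log (figarchPi d j)| ≤
      c * ((j : ℕ) : ℝ) ^ (-(9/8) : ℝ) := by
    intro j
    have := key_bound hd hd1 (j : ℕ) j.2
    rw [hcdef]
    exact this
  have hsum_maj : Summable (fun j : ℕ+ => c * ((j : ℕ) : ℝ) ^ (-(9/8) : ℝ)) :=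
    summable_rpow_pnat.mul_left c
  have habs : Summable (fun j : ℕ+ => |figarchPi d j * Real.log (figarchPi d j)|) :=
    Summable.of_nonneg_of_le (fun j => abs_nonneg _) hmaj hsum_maj
  have hsum : Summable (fun j : ℕ+ => figarchPi d j * Real.log (figarchPi d j)) :=
    habs.of_abs
  refine ⟨hsum, ?_⟩
  calc |∑' j : ℕ+, figarchPi d j * Real.log (figarchPi d j)|
      ≤ ∑' j : ℕ+, |figarchPi d j * Real.log (figarchPi d j)| := by
        have h := norm_tsum_le_tsum_norm
          (f := fun j : ℕ+ => figarchPi d j * Real.log (figarchPi d j))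
          (by simpa only [Real.norm_eq_abs] using habs)
        simpa only [Real.norm_eq_abs] using h
    _ ≤ ∑' j : ℕ+, c * ((j : ℕ) : ℝ) ^ (-(9/8) : ℝ) := Summable.tsum_le_tsum hmaj habs hsum_maj
    _ = c * ∑' j : ℕ+, ((j : ℕ) : ℝ) ^ (-(9/8) : ℝ) := tsum_mul_left

open Filter in
lemma tendsto_bound :
    Tendsto (fun d : ℝ => Real.sqrt (1 - d) * (16 + (-Real.log d - Real.log (1 - d))))
      (nhdsWithin 1 (Set.Iio 1)) (nhds 0) := by
  have hpart1 : Tendsto (fun d : ℝ => Real.sqrt (1 - d) * (16 - Real.log d))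
      (nhdsWithin 1 (Set.Iio 1)) (nhds 0) := by
    have hc : Tendsto (fun d : ℝ => Real.sqrt (1 - d) * (16 - Real.log d)) (nhds 1)
        (nhds (Real.sqrt (1 - 1) * (16 - Real.log 1))) := by
      apply Filter.Tendsto.mul
      · exact (Real.continuous_sqrt.comp (continuous_const.sub continuous_id)).tendsto 1
      · exact (continuous_const.tendsto 1).sub ((Real.continuousAt_log (by norm_num)))
    have : Real.sqrt (1 - 1) * (16 - Real.log 1) = 0 := by simp
    rw [this] at hc
    exact hc.mono_left nhdsWithin_le_nhds
  have hmap : Tendsto (fun d : ℝ => 1 - d) (nhdsWithin 1 (Set.Iio 1))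
      (nhdsWithin 0 (Set.Ioi 0)) := by
    apply tendsto_nhdsWithin_of_tendsto_nhds_of_eventually_within
    · have : Tendsto (fun d : ℝ => 1 - d) (nhds 1) (nhds (1 - 1)) :=
        (continuous_const.sub continuous_id).tendsto 1
      simpa using this.mono_left nhdsWithin_le_nhds
    · filter_upwards [self_mem_nhdsWithin] with x hx
      simp only [Set.mem_Iio] at hx
      simp only [Set.mem_Ioi]
      linarith
  have hpart2 : Tendsto (fun d : ℝ => Real.log (1 - d) * (1 - d) ^ ((1:ℝ)/2))
      (nhdsWithin 1 (Set.Iio 1)) (nhds 0) :=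
    (tendsto_log_mul_rpow_nhdsGT_zero (by norm_num)).comp hmap
  have heq : (fun d : ℝ => Real.sqrt (1 - d) * (16 + (-Real.log d - Real.log (1 - d))))
      = fun d : ℝ => Real.sqrt (1 - d) * (16 - Real.log d)
          - Real.log (1 - d) * (1 - d) ^ ((1:ℝ)/2) := by
    funext x
    rw [← Real.sqrt_eq_rpow]
    ring
  rw [heq]
  simpa using hpart1.sub hpart2

open Filter in
lemma exists_dstar {ε : ℝ} (hε : 0 < ε) :
    ∃ dstar : ℝ, 1/2 ≤ dstar ∧ dstar < 1 ∧ ∀ d : ℝ, dstar < d → d < 1 →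
      Summable (fun j : ℕ+ => figarchPi d j * Real.log (figarchPi d j)) ∧
      |∑' j : ℕ+, figarchPi d j * Real.log (figarchPi d j)| < ε := by
  set S : ℝ := ∑' j : ℕ+, ((j : ℕ) : ℝ) ^ (-(9/8) : ℝ) with hSdef
  have htend : Tendsto
      (fun d : ℝ => Real.sqrt (1 - d) * (16 + (-Real.log d - Real.log (1 - d))) * S)
      (nhdsWithin 1 (Set.Iio 1)) (nhds 0) := by
    have := tendsto_bound.mul_const S
    simpa using this
  have hev1 : ∀ᶠ d in nhdsWithin (1:ℝ) (Set.Iio 1),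
      Real.sqrt (1 - d) * (16 + (-Real.log d - Real.log (1 - d))) * S < ε :=
    htend.eventually_lt_const hε
  have hev2 : ∀ᶠ d in nhdsWithin (1:ℝ) (Set.Iio 1), (1:ℝ)/2 < d := by
    have hmem : Set.Ioo (1/2 : ℝ) 1 ∈ nhdsWithin (1:ℝ) (Set.Iio 1) :=
      Ioo_mem_nhdsLT_of_mem (by constructor <;> norm_num)
    filter_upwards [hmem] with x hx
    exact hx.1
  obtain ⟨l, hl, hsub⟩ := mem_nhdsLT_iff_exists_Ioo_subset.mp (hev1.and hev2)
  refine ⟨max l (1/2), le_max_right _ _, ?_, ?_⟩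
  · apply max_lt hl (by norm_num)
  · intro d hd hd1
    have hdl : l < d := lt_of_le_of_lt (le_max_left _ _) hd
    have hd2 : (1:ℝ)/2 < d := lt_of_le_of_lt (le_max_right _ _) hd
    have hmem : d ∈ Set.Ioo l 1 := ⟨hdl, hd1⟩
    obtain ⟨hb, _⟩ := hsub hmem
    obtain ⟨hsum, hest⟩ := L_est hd2 hd1
    exact ⟨hsum, lt_of_le_of_lt hest hb⟩

open MeasureTheory in
lemma integral_entropy_pos {Ω : Type*} [MeasurableSpace Ω] (P : Measure Ω)
    [IsProbabilityMeasure P] (z0 : Ω → ℝ) (hz0 : Measurable z0)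
    (hint : Integrable (fun ω => z0 ω ^ 2) P)
    (hmu1 : (∫ ω, z0 ω ^ 2 ∂P) = 1)
    (hone : P {ω | |z0 ω| = 1} < 1)
    (hI : Integrable (fun ω => z0 ω ^ 2 * Real.log (z0 ω ^ 2)) P) :
    0 < ∫ ω, z0 ω ^ 2 * Real.log (z0 ω ^ 2) ∂P := by
  set f : Ω → ℝ := fun ω => z0 ω ^ 2 * Real.log (z0 ω ^ 2) - (z0 ω ^ 2 - 1) with hfdef
  have hfnn : 0 ≤ f := by
    intro ω
    have := sub_one_le_mul_log (sq_nonneg (z0 ω))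
    simp only [hfdef, Pi.zero_apply]
    linarith
  have hint1 : Integrable (fun ω => z0 ω ^ 2 - 1) P := hint.sub (integrable_const 1)
  have hfint : Integrable f P := hI.sub hint1
  have hfI : ∫ ω, f ω ∂P = ∫ ω, z0 ω ^ 2 * Real.log (z0 ω ^ 2) ∂P := by
    rw [hfdef]
    rw [integral_sub hI hint1, integral_sub hint (integrable_const 1)]
    simp [hmu1]
  rw [← hfI]
  rcases lt_or_eq_of_le (integral_nonneg hfnn) with h | h
  · exact h
  · exfalso
    have hzero : f =ᵐ[P] 0 := (integral_eq_zero_iff_of_nonneg hfnn hfint).mp h.symm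
    have hae : ∀ᵐ ω ∂P, |z0 ω| = 1 := by
      filter_upwards [hzero] with ω hω
      simp only [hfdef, Pi.zero_apply] at hω
      by_contra hne
      have ht : z0 ω ^ 2 ≠ 1 := by
        intro hsq
        rcases sq_eq_one_iff.mp hsq with h1 | h1 <;> simp [h1] at hne
      have := sub_one_lt_mul_log (sq_nonneg (z0 ω)) ht
      linarith
    have hmeas : MeasurableSet {ω | |z0 ω| = 1} :=
      hz0.abs (measurableSet_singleton 1)
    have hcompl : P ({ω | |z0 ω| = 1}ᶜ) = 0 := by
      rw [MeasureTheory.ae_iff] at hae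
      convert hae using 2
      rfl
    have : P {ω | |z0 ω| = 1} = 1 := (prob_compl_eq_zero_iff hmeas).mp hcompl
    rw [this] at hone
    exact lt_irrefl _ hone

end FigarchAux

open FigarchAux

/-- If `E[z_0²] = 1` and `P(|z_0| = 1) < 1`, then there exists `d* ∈ [0,1)` such that for all
`d ∈ (d*,1)` one has `L(d) + E[z_0² log(z_0²)] > 0`, where
`L(d) = Σ_{j≥1} π_j(d) log π_j(d)`. -/
theorem figarch_entropy_condition {Ω : Type*} [MeasurableSpace Ω] (P : Measure Ω)
    [IsProbabilityMeasure P] (z0 : Ω → ℝ) (hz0 : Measurable z0)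
    (hint : Integrable (fun ω => z0 ω ^ 2) P)
    (hmu1 : (∫ ω, z0 ω ^ 2 ∂P) = 1)
    (hone : P {ω | |z0 ω| = 1} < 1) :
    ∃ dstar : ℝ, 0 ≤ dstar ∧ dstar < 1 ∧ ∀ d : ℝ, dstar < d → d < 1 →
      Summable (fun j : ℕ+ => figarchPi d j * Real.log (figarchPi d j)) ∧
      EntropyPos P z0 (figarchPi d) := by
  by_cases hI : Integrable (fun ω => z0 ω ^ 2 * Real.log (z0 ω ^ 2)) P
  · have hE : 0 < ∫ ω, z0 ω ^ 2 * Real.log (z0 ω ^ 2) ∂P :=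
      integral_entropy_pos P z0 hz0 hint hmu1 hone hI
    obtain ⟨ds, hds12, hds1, h⟩ := exists_dstar hE
    refine ⟨ds, by linarith, hds1, fun d hd hd1 => ?_⟩
    obtain ⟨hsum, hest⟩ := h d hd hd1
    refine ⟨hsum, Or.inr ?_⟩
    have := neg_abs_le (∑' j : ℕ+, figarchPi d j * Real.log (figarchPi d j))
    linarith [abs_nonneg (∑' j : ℕ+, figarchPi d j * Real.log (figarchPi d j))]
  · obtain ⟨ds, hds12, hds1, h⟩ := exists_dstar (one_pos)
    exact ⟨ds, by linarith, hds1, fun d hd hd1 => ⟨(h d hd hd1).1, Or.inl hI⟩⟩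


end
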